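/- Maximally entangled two-qubit states possess only local magic: if v ∈ ℂ² ⊗ ℂ² is a unit vector with Tr_B(v vᴴ) = (1/2)·I (the maximally mixed single-qubit state), then there exist unitaries U_A, U_B ∈ U(2) such that M₂( (U_A ⊗ U_B) v vᴴ (U_A ⊗ U_B)ᴴ ) = 0; equivalently, the non-local magic M₂ᴺᴸ(v vᴴ) = 0. -/

import Mathlib

noncomputable section
open Matrix Kronecker

/-- The four single-qubit Pauli matrices I, X, Y, Z. -/
def pauli : Fin 4 → Matrix (Fin 2) (Fin 2) ℂ :=
  ![1, !![0, 1; 1, 0], !![0, -Complex.I; Complex.I, 0], !![1, 0; 0, -1]]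

/-- Two-qubit Pauli strings σ₁ ⊗ σ₂. -/
def pauli2 (a : Fin 4 × Fin 4) : Matrix (Fin 2 × Fin 2) (Fin 2 × Fin 2) ℂ :=
  pauli a.1 ⊗ₖ pauli a.2

/-- Rank-one density matrix v vᴴ. -/
def dm {ι : Type*} (v : ι → ℂ) : Matrix ι ι ℂ := Matrix.vecMulVec v (star v)

/-- Stabilizer 2-Rényi entropy of a two-qubit state. -/
def M2two (ψ : Matrix (Fin 2 × Fin 2) (Fin 2 × Fin 2) ℂ) : ℝ :=
  - Real.logb 2 ((1 / 4) * ∑ a : Fin 4 × Fin 4, ‖(pauli2 a * ψ).trace‖ ^ 4)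

/-- Non-local magic: infimum of stabilizer entropy over local unitary orbits. -/
def M2NL (ψ : Matrix (Fin 2 × Fin 2) (Fin 2 × Fin 2) ℂ) : ℝ :=
  ⨅ U : Matrix.unitaryGroup (Fin 2) ℂ × Matrix.unitaryGroup (Fin 2) ℂ,
    M2two (((U.1 : Matrix (Fin 2) (Fin 2) ℂ) ⊗ₖ (U.2 : Matrix (Fin 2) (Fin 2) ℂ)) * ψ *
      ((U.1 : Matrix (Fin 2) (Fin 2) ℂ) ⊗ₖ (U.2 : Matrix (Fin 2) (Fin 2) ℂ))ᴴ)

/-- Partial trace over the second qubit. -/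
def ptraceB (M : Matrix (Fin 2 × Fin 2) (Fin 2 × Fin 2) ℂ) : Matrix (Fin 2) (Fin 2) ℂ :=
  Matrix.of fun i i' => ∑ j : Fin 2, M (i, j) (i', j)

/-! Write the amplitudes of `v` as the 2 × 2 matrix `V`. Then `Tr_B (v vᴴ) = V Vᴴ`, so maximal
mixedness says that `√2 V` is unitary, and `U_A = √2 Vᴴ` rotates `v` into the Bell state
`(|00⟩ + |11⟩)/√2`, which has `|Tr(Pψ)| = 1` on its four stabilizers and `0` elsewhere, hence
`M₂ = 0`. Conversely `M₂ ≥ 0` on every pure state: `|Tr(Pψ)| ≤ 1` since `P` is unitary, and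
`Σ_P |Tr(Pψ)|² = 4` since the Pauli strings are orthogonal, so `Σ_P |Tr(Pψ)|⁴ ≤ 4`. -/

section PureState

variable {ι : Type*} [Fintype ι]

lemma mul_dm_mul_conjTranspose (M : Matrix ι ι ℂ) (w : ι → ℂ) :
    M * dm w * Mᴴ = dm (M *ᵥ w) := by
  rw [dm, mul_vecMulVec, vecMulVec_mul, ← star_mulVec, dm]

lemma trace_mul_dm (A : Matrix ι ι ℂ) (w : ι → ℂ) :
    (A * dm w).trace = star w ⬝ᵥ (A *ᵥ w) := by
  rw [dm, mul_vecMulVec, trace_vecMulVec, dotProduct_comm]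

lemma star_dotProduct_self_eq_sum_normSq (w : ι → ℂ) :
    star w ⬝ᵥ w = ((∑ i, Complex.normSq (w i) : ℝ) : ℂ) := by
  simp [dotProduct, Complex.normSq_eq_conj_mul_self]

lemma sum_normSq_mulVec_of_mem_unitaryGroup [DecidableEq ι] {M : Matrix ι ι ℂ}
    (hM : M ∈ unitaryGroup ι ℂ) (w : ι → ℂ) :
    ∑ i, Complex.normSq ((M *ᵥ w) i) = ∑ i, Complex.normSq (w i) := by
  have h : star (M *ᵥ w) ⬝ᵥ (M *ᵥ w) = star w ⬝ᵥ w := by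
    rw [star_mulVec, dotProduct_mulVec, vecMul_vecMul, ← star_eq_conjTranspose,
      (mem_unitaryGroup_iff'.mp hM), vecMul_one]
  rwa [star_dotProduct_self_eq_sum_normSq, star_dotProduct_self_eq_sum_normSq,
    Complex.ofReal_inj] at h

lemma normSq_star_dotProduct_le (w u : ι → ℂ) :
    Complex.normSq (star w ⬝ᵥ u) ≤ (∑ i, Complex.normSq (w i)) * ∑ i, Complex.normSq (u i) := by
  have h := norm_inner_le_norm (𝕜 := ℂ) (WithLp.toLp 2 w) (WithLp.toLp 2 u)
  rw [EuclideanSpace.inner_toLp_toLp, dotProduct_comm] at h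
  have h2 := pow_le_pow_left₀ (norm_nonneg _) h 2
  simpa only [mul_pow, EuclideanSpace.norm_sq_eq, Complex.sq_norm, PiLp.toLp_apply] using h2

lemma normSq_trace_mul_dm_le_one [DecidableEq ι] {M : Matrix ι ι ℂ}
    (hM : M ∈ unitaryGroup ι ℂ) {w : ι → ℂ} (hw : ∑ i, Complex.normSq (w i) = 1) :
    Complex.normSq (M * dm w).trace ≤ 1 := by
  simpa [trace_mul_dm, sum_normSq_mulVec_of_mem_unitaryGroup hM, hw] using
    normSq_star_dotProduct_le w (M *ᵥ w)

lemma sum_sum_normSq_dm_apply (w : ι → ℂ) :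
    ∑ p, ∑ q, Complex.normSq (dm w p q) = (∑ i, Complex.normSq (w i)) ^ 2 := by
  simp [dm, vecMulVec_apply, sq, Finset.sum_mul_sum]

end PureState

lemma pauli_mem_unitaryGroup (i : Fin 4) : pauli i ∈ unitaryGroup (Fin 2) ℂ := by
  rw [mem_unitaryGroup_iff']
  fin_cases i <;> ext a b <;> fin_cases a <;> fin_cases b <;>
    simp [pauli, mul_apply, Fin.sum_univ_succ, one_apply]

lemma pauli2_mem_unitaryGroup (a : Fin 4 × Fin 4) : pauli2 a ∈ unitaryGroup (Fin 2 × Fin 2) ℂ :=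
  kronecker_mem_unitary (pauli_mem_unitaryGroup a.1) (pauli_mem_unitaryGroup a.2)

lemma sum_pauli_apply_mul_conj (x y x' y' : Fin 2) :
    ∑ i, pauli i x y * starRingEnd ℂ (pauli i x' y') = if x = x' ∧ y = y' then 2 else 0 := by
  fin_cases x <;> fin_cases y <;> fin_cases x' <;> fin_cases y' <;>
    norm_num [pauli, Fin.sum_univ_succ]

lemma sum_pauli2_apply_mul_conj (x y x' y' : Fin 2 × Fin 2) :
    ∑ a, pauli2 a x y * starRingEnd ℂ (pauli2 a x' y') = if x = x' ∧ y = y' then 4 else 0 := by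
  have hsplit : ∀ a : Fin 4 × Fin 4, pauli2 a x y * starRingEnd ℂ (pauli2 a x' y') =
      (pauli a.1 x.1 y.1 * starRingEnd ℂ (pauli a.1 x'.1 y'.1)) *
        (pauli a.2 x.2 y.2 * starRingEnd ℂ (pauli a.2 x'.2 y'.2)) := fun a => by
    simp only [pauli2, kroneckerMap_apply, map_mul]
    ring
  simp_rw [hsplit, Fintype.sum_prod_type, ← Finset.sum_mul_sum, sum_pauli_apply_mul_conj,
    ite_zero_mul_ite_zero, Prod.ext_iff]
  exact if_congr (by tauto) (by norm_num) rfl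

lemma sum_normSq_trace_pauli2_mul (A : Matrix (Fin 2 × Fin 2) (Fin 2 × Fin 2) ℂ) :
    ∑ a, Complex.normSq (pauli2 a * A).trace = 4 * ∑ p, ∑ q, Complex.normSq (A p q) := by
  have htrace : ∀ a, (pauli2 a * A).trace = ∑ x : (Fin 2 × Fin 2) × (Fin 2 × Fin 2),
      pauli2 a x.1 x.2 * A x.2 x.1 := fun a => by
    simp only [trace, diag, mul_apply, Fintype.sum_prod_type]
  apply Complex.ofReal_injective
  push_cast
  simp_rw [← Complex.mul_conj, htrace, map_sum, Finset.sum_mul_sum, map_mul]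
  have hpair : ∀ x y : (Fin 2 × Fin 2) × (Fin 2 × Fin 2),
      ∑ a, pauli2 a x.1 x.2 * A x.2 x.1 *
          (starRingEnd ℂ (pauli2 a y.1 y.2) * starRingEnd ℂ (A y.2 y.1)) =
        if x = y then 4 * (A x.2 x.1 * starRingEnd ℂ (A x.2 x.1)) else 0 := fun x y => by
    simp_rw [mul_mul_mul_comm _ (A x.2 x.1), ← Finset.sum_mul, sum_pauli2_apply_mul_conj,
      ← Prod.ext_iff, ite_mul, zero_mul]
    split_ifs with h <;> simp [h]
  rw [Finset.sum_comm]
  simp_rw [Finset.sum_comm (γ := Fin 4 × Fin 4), hpair, Finset.sum_ite_eq, Finset.mem_univ,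
    if_true, ← Finset.mul_sum]
  rw [Fintype.sum_prod_type, Finset.sum_comm]

lemma sum_normSq_trace_pauli2_mul_dm {w : Fin 2 × Fin 2 → ℂ}
    (hw : ∑ i, Complex.normSq (w i) = 1) : ∑ a, Complex.normSq (pauli2 a * dm w).trace = 4 := by
  rw [sum_normSq_trace_pauli2_mul, sum_sum_normSq_dm_apply, hw]
  norm_num

lemma sum_norm_trace_pauli2_mul_dm_pow_four_le {w : Fin 2 × Fin 2 → ℂ}
    (hw : ∑ i, Complex.normSq (w i) = 1) : ∑ a, ‖(pauli2 a * dm w).trace‖ ^ 4 ≤ 4 :=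
  calc ∑ a, ‖(pauli2 a * dm w).trace‖ ^ 4
      = ∑ a, Complex.normSq (pauli2 a * dm w).trace ^ 2 := by
        simp only [← Complex.sq_norm, ← pow_mul]
    _ ≤ ∑ a, Complex.normSq (pauli2 a * dm w).trace :=
        Finset.sum_le_sum fun a _ => pow_le_of_le_one (Complex.normSq_nonneg _)
          (normSq_trace_mul_dm_le_one (pauli2_mem_unitaryGroup a) hw) two_ne_zero
    _ = 4 := sum_normSq_trace_pauli2_mul_dm hw

lemma M2two_conj_dm_nonneg {M : Matrix (Fin 2 × Fin 2) (Fin 2 × Fin 2) ℂ}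
    (hM : M ∈ unitaryGroup (Fin 2 × Fin 2) ℂ) {w : Fin 2 × Fin 2 → ℂ}
    (hw : ∑ i, Complex.normSq (w i) = 1) : 0 ≤ M2two (M * dm w * Mᴴ) := by
  rw [mul_dm_mul_conjTranspose, M2two, neg_nonneg]
  have hMw : ∑ i, Complex.normSq ((M *ᵥ w) i) = 1 := by
    rw [sum_normSq_mulVec_of_mem_unitaryGroup hM, hw]
  refine Real.logb_nonpos one_lt_two (by positivity) ?_
  linarith [sum_norm_trace_pauli2_mul_dm_pow_four_le hMw]

def bell : Fin 2 × Fin 2 → ℂ := fun p => if p.1 = p.2 then ((Real.sqrt 2)⁻¹ : ℝ) else 0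

lemma M2two_dm_bell : M2two (dm bell) = 0 := by
  have hdm : dm bell = of fun p q => if p.1 = p.2 ∧ q.1 = q.2 then (1 / 2 : ℂ) else 0 := by
    ext p q
    simp only [dm, vecMulVec_apply, bell, Pi.star_apply, of_apply]
    split_ifs <;> simp_all [← Complex.ofReal_mul, ← mul_inv]
  rw [M2two, hdm]
  norm_num [trace, mul_apply, Fintype.sum_prod_type, pauli2, pauli, Fin.sum_univ_succ,
    Complex.norm_def, Complex.normSq]

lemma kronecker_one_mulVec_apply {R m n : Type*} [Semiring R] [Fintype m] [Fintype n]
    [DecidableEq n] (U : Matrix m m R) (v : m × n → R) (i : m) (j : n) :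
    ((U ⊗ₖ 1) *ᵥ v) (i, j) = (U * of (Function.curry v)) i j := by
  simp [mulVec, dotProduct, Fintype.sum_prod_type, one_apply, mul_apply]

lemma ptraceB_dm (v : Fin 2 × Fin 2 → ℂ) :
    ptraceB (dm v) = of (Function.curry v) * (of (Function.curry v))ᴴ := by
  ext i i'
  simp [ptraceB, dm, vecMulVec_apply, mul_apply]

lemma exists_mem_unitaryGroup_kronecker_one_mulVec_eq_bell {v : Fin 2 × Fin 2 → ℂ}
    (hmax : ptraceB (dm v) = (1 / 2 : ℂ) • 1) :
    ∃ U ∈ unitaryGroup (Fin 2) ℂ, (U ⊗ₖ 1) *ᵥ v = bell := by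
  set V := of (Function.curry v)
  set s : ℂ := ((Real.sqrt 2 : ℝ) : ℂ)
  have hs : s * s = 2 := by
    rw [← Complex.ofReal_mul, Real.mul_self_sqrt zero_le_two, Complex.ofReal_ofNat]
  have hW : s • V ∈ unitaryGroup (Fin 2) ℂ := by
    have hsV : star (s • V) = s • Vᴴ := by
      rw [star_eq_conjTranspose, conjTranspose_smul, Complex.star_def, Complex.conj_ofReal]
    rw [mem_unitaryGroup_iff, hsV, smul_mul_smul_comm, ← ptraceB_dm, hmax, hs, smul_smul]
    norm_num
  refine ⟨star (s • V), Unitary.star_mem hW, funext fun ⟨i, j⟩ => ?_⟩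
  have hUV : star (s • V) * V = s⁻¹ • 1 := by
    have hs0 : s ≠ 0 := by simp [s]
    rw [← mem_unitaryGroup_iff'.mp hW, Matrix.mul_smul, smul_smul, inv_mul_cancel₀ hs0, one_smul]
  rw [kronecker_one_mulVec_apply, hUV, Matrix.smul_apply, one_apply, bell, Complex.ofReal_inv]
  split_ifs <;> simp [s]

theorem maximally_entangled_has_only_local_magic
    (v : Fin 2 × Fin 2 → ℂ) (hv : ∑ i, Complex.normSq (v i) = 1)
    (hmax : ptraceB (dm v) = ((1 / 2 : ℂ)) • (1 : Matrix (Fin 2) (Fin 2) ℂ)) :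
    (∃ UA UB : Matrix (Fin 2) (Fin 2) ℂ,
        UA ∈ Matrix.unitaryGroup (Fin 2) ℂ ∧ UB ∈ Matrix.unitaryGroup (Fin 2) ℂ ∧
        M2two ((UA ⊗ₖ UB) * dm v * (UA ⊗ₖ UB)ᴴ) = 0) ∧
      M2NL (dm v) = 0 := by
  obtain ⟨U, hU, hUv⟩ := exists_mem_unitaryGroup_kronecker_one_mulVec_eq_bell hmax
  have hzero : M2two ((U ⊗ₖ 1) * dm v * (U ⊗ₖ 1)ᴴ) = 0 := by
    rw [mul_dm_mul_conjTranspose, hUv, M2two_dm_bell]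
  have hnonneg (W : unitaryGroup (Fin 2) ℂ × unitaryGroup (Fin 2) ℂ) :
      0 ≤ M2two (((W.1 : Matrix (Fin 2) (Fin 2) ℂ) ⊗ₖ (W.2 : Matrix (Fin 2) (Fin 2) ℂ)) * dm v *
        ((W.1 : Matrix (Fin 2) (Fin 2) ℂ) ⊗ₖ (W.2 : Matrix (Fin 2) (Fin 2) ℂ))ᴴ) :=
    M2two_conj_dm_nonneg (kronecker_mem_unitary W.1.2 W.2.2) hv
  refine ⟨⟨U, 1, hU, one_mem _, hzero⟩, le_antisymm ?_ (le_ciInf hnonneg)⟩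
  exact (ciInf_le ⟨0, Set.forall_mem_range.2 hnonneg⟩ (⟨U, hU⟩, 1)).trans_eq hzero
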